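/- Both sides of Stanley's formula, viewed as polynomial functions F(p,q) in p_1,...,p_m, q_1,...,q_m, satisfy the functional equation F(p,q)|_{q_i = q_{i+1}} = F(p_1,...,p_i + p_{i+1},...,p_m, q_1,...,q_i, q_{i+2},...,q_m); in particular the right-hand side R_m(p,q) = (-1)^k Σ_{(σ,φ)∈S(k)^{(m)}} ∏_{b∈C(σ)} p_{φ(b)} ∏_{c∈C(σμ)} (−q_{ψ(c)}) satisfies R_m(p,q)|_{q_i=q_{i+1}} = R_{m-1}(p_1,...,p_i+p_{i+1},...,p_m, q_1,...,q_i,q_{i+2},...,q_m). -/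

import Mathlib

open scoped Classical

/-- `μ'` is obtained from the partition `μ` of `k+1` by removing one (corner) box:
some part `p` of `μ` is replaced by `p - 1` (deleted if `p = 1`). -/
def IsCover {k : ℕ} (μ' : Nat.Partition k) (μ : Nat.Partition (k + 1)) : Prop :=
  ∃ p ∈ μ.parts, μ'.parts = Multiset.filter (fun x => 0 < x) ((p - 1) ::ₘ μ.parts.erase p)

/-- The canonical embedding of `S(k)` into `S(n)` for `k ≤ n`, acting on the first `k`
points and fixing the others. -/
noncomputable def embPerm {k n : ℕ} (h : k ≤ n) :
    Equiv.Perm (Fin k) →* Equiv.Perm (Fin n) :=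
  Equiv.Perm.viaEmbeddingHom (Fin.castLEEmb h)

/-- A family `W k λ` (for `λ ⊢ k`) realizing the canonical indexing of the irreducible
(complex) representations of the symmetric groups by partitions: the `W k λ` are
irreducible, pairwise non-isomorphic, they satisfy the branching rule (stated as a
character identity along the standard embedding `S(k) ⊆ S(k+1)`), the one-row partition
carries the trivial representation and the one-column partition the sign representation. -/
structure SymmIrrepFamily : Type 1 where
  W : ∀ k : ℕ, Nat.Partition k → FDRep ℂ (Equiv.Perm (Fin k))
  simple : ∀ (k : ℕ) (l : Nat.Partition k), CategoryTheory.Simple (W k l)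
  non_iso : ∀ (k : ℕ) (l₁ l₂ : Nat.Partition k), l₁ ≠ l₂ → IsEmpty (W k l₁ ≅ W k l₂)
  branching : ∀ (k : ℕ) (l : Nat.Partition (k + 1)) (σ : Equiv.Perm (Fin k)),
    (W (k + 1) l).character (embPerm (Nat.le_succ k) σ)
      = ∑ l' : Nat.Partition k, if IsCover l' l then (W k l').character σ else 0
  row_trivial : ∀ (k : ℕ) (l : Nat.Partition k), l.parts = Multiset.replicate 1 k →
    ∀ σ, (W k l).character σ = 1
  complete : ∀ (k : ℕ) (V : FDRep ℂ (Equiv.Perm (Fin k))), CategoryTheory.Simple V →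
    ∃ l : Nat.Partition k, Nonempty (V ≅ W k l)
  col_sign : ∀ (k : ℕ) (l : Nat.Partition k), l.parts = Multiset.replicate k 1 →
    ∀ σ, (W k l).character σ = ((Equiv.Perm.sign σ : ℤ) : ℂ)

/-- The normalised character `χ̂_ν(μ) = n(n-1)⋯(n-k+1) χ_ν(μ)/χ_ν(id)` for `μ ∈ S(k)`,
`ν ⊢ n`, `k ≤ n`. -/
noncomputable def normChar (F : SymmIrrepFamily) {k n : ℕ} (h : k ≤ n)
    (ν : Nat.Partition n) (μ : Equiv.Perm (Fin k)) : ℂ :=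
  (n.descFactorial k : ℂ) * (F.W n ν).character (embPerm h μ) / (F.W n ν).character 1

open Equiv Equiv.Perm

/-- The set of cycles (orbits, including fixed points) of a permutation of `Fin k`,
as the quotient of `Fin k` by the `SameCycle` relation. -/
def PermCycles {k : ℕ} (σ : Equiv.Perm (Fin k)) : Type :=
  Quotient (Equiv.Perm.SameCycle.setoid σ)

instance {k : ℕ} (σ : Equiv.Perm (Fin k)) : DecidableEq (PermCycles σ) :=
  @Quotient.decidableEq _ (Equiv.Perm.SameCycle.setoid σ)
    (fun x y => (inferInstance : Decidable (σ.SameCycle x y)))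

instance {k : ℕ} (σ : Equiv.Perm (Fin k)) : Fintype (PermCycles σ) :=
  Fintype.ofSurjective (fun a => Quotient.mk (Equiv.Perm.SameCycle.setoid σ) a)
    (fun c => c.exists_rep)

/-- The cycle of `σ` containing `a`. -/
def cycleMk {k : ℕ} (σ : Equiv.Perm (Fin k)) (a : Fin k) : PermCycles σ :=
  Quotient.mk (Equiv.Perm.SameCycle.setoid σ) a

/-- The elements of a cycle `c` of `σ`, as a `Finset`. -/
def cycleElems {k : ℕ} (σ : Equiv.Perm (Fin k)) (c : PermCycles σ) : Finset (Fin k) :=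
  Finset.univ.filter (fun a => cycleMk σ a = c)

lemma cycleElems_nonempty {k : ℕ} (σ : Equiv.Perm (Fin k)) (c : PermCycles σ) :
    (cycleElems σ c).Nonempty := by
  obtain ⟨a, ha⟩ := c.exists_rep
  exact ⟨a, Finset.mem_filter.mpr ⟨Finset.mem_univ _, ha⟩⟩

/-- The minimal element of a cycle of `σ`. -/
def cycMin {k : ℕ} (σ : Equiv.Perm (Fin k)) (c : PermCycles σ) : Fin k :=
  (cycleElems σ c).min' (cycleElems_nonempty σ c)

/-- The number of cycles (orbits, including fixed points) of `σ`. -/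
def cycleCount {k : ℕ} (σ : Equiv.Perm (Fin k)) : ℕ :=
  Fintype.card (PermCycles σ)

/-- The maximum of `φ` over the cycle `c`. -/
def cycMaxVal {k m : ℕ} (σ : Equiv.Perm (Fin k)) (φ : Fin k → Fin m) (c : PermCycles σ) :
    Fin m :=
  ((cycleElems σ c).image φ).max' ((cycleElems_nonempty σ c).image φ)

/-- The right-hand side of Stanley's formula, as a (polynomial) function of
`p_1,…,p_m, q_1,…,q_m`. -/
noncomputable def stanleyRHS {k : ℕ} (μ : Equiv.Perm (Fin k)) (m : ℕ)
    (p q : Fin m → ℂ) : ℂ :=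
  (-1 : ℂ) ^ k * ∑ σ : Equiv.Perm (Fin k),
    ∑ φ ∈ Finset.univ.filter (fun φ : Fin k → Fin m => φ ∘ ⇑σ = φ),
      (∏ b : PermCycles σ, p (φ (cycMin σ b))) *
        ∏ c : PermCycles (σ * μ), (-(q (cycMaxVal (σ * μ) φ c)))

/-- Merging `p_i` and `p_{i+1}` into `p_i + p_{i+1}`. -/
def mergeP {α : Type*} [Add α] {m : ℕ} (i : Fin m) (p : Fin (m + 1) → α) : Fin m → α :=
  fun j => if (j : ℕ) < (i : ℕ) then p j.castSucc
    else if j = i then p i.castSucc + p i.succ else p j.succ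

/-- Deleting `q_{i+1}` from the list `q_1,…,q_{m+1}`. -/
def mergeQ {α : Type*} {m : ℕ} (i : Fin m) (q : Fin (m + 1) → α) : Fin m → α :=
  fun j => if (j : ℕ) ≤ (i : ℕ) then q j.castSucc else q j.succ

/-!
Write `Fin.predAbove i : Fin (m + 1) → Fin m` for the monotone map merging the colours `i` and
`i + 1`. A `σ`-invariant colouring is a colouring of the cycles of `σ`. In the term of a colouring
`g`, the `q`-factor only depends on `predAbove i ∘ g`: maxima over cycles commute with the
monotone `predAbove i`, and `q = mergeQ i q ∘ predAbove i` once `q_i = q_{i+1}`. Summing the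
`p`-factor over each fibre of `g ↦ predAbove i ∘ g` therefore replaces `p` by `mergeP i p`.
On the character side the two partitions have the same multiset of parts, for the same reason.
-/

open Finset

lemma Fin.val_predAbove {n : ℕ} (p : Fin n) (x : Fin (n + 1)) :
    (p.predAbove x : ℕ) = if (p : ℕ) < x then (x : ℕ) - 1 else x := by
  simp only [Fin.predAbove, Fin.lt_def, Fin.val_castSucc]
  split_ifs <;> simp

lemma mergeQ_predAbove {α : Type*} {m : ℕ} (i : Fin m) (q : Fin (m + 1) → α)
    (hq : q i.succ = q i.castSucc) (x : Fin (m + 1)) : mergeQ i q (i.predAbove x) = q x := by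
  have h_succAbove : ∀ j, mergeQ i q j = q (i.succ.succAbove j) := fun j => by
    rcases le_or_gt j i with h | h
    · rw [mergeQ, if_pos (Fin.le_def.mp h), Fin.succAbove_succ_of_le _ _ h]
    · rw [mergeQ, if_neg (Nat.not_le.mpr (Fin.lt_def.mp h)), Fin.succAbove_succ_of_lt _ _ h]
  by_cases hx : x = i.succ
  · rw [h_succAbove, hx, Fin.predAbove_succ_self, Fin.succAbove_succ_self, hq]
  · rw [h_succAbove, Fin.succ_succAbove_predAbove hx]

lemma sum_filter_predAbove_eq_mergeP {α : Type*} [AddCommMonoid α] {m : ℕ} (i : Fin m)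
    (p : Fin (m + 1) → α) (j : Fin m) :
    ∑ x with i.predAbove x = j, p x = mergeP i p j := by
  have hfiber : ∀ x : Fin (m + 1), i.predAbove x = j ↔
      (x = j.castSucc ∧ (j : ℕ) ≤ i) ∨ (x = j.succ ∧ (i : ℕ) ≤ j) := fun x => by
    simp only [Fin.ext_iff, Fin.val_predAbove, Fin.val_castSucc, Fin.val_succ]
    split_ifs <;> omega
  rcases lt_trichotomy (j : ℕ) i with h | h | h
  · have : ({x | i.predAbove x = j} : Finset _) = {j.castSucc} := by
      ext x; simp only [mem_filter, mem_univ, true_and, hfiber, mem_singleton]; omega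
    rw [this, sum_singleton, mergeP, if_pos h]
  · obtain rfl : j = i := Fin.ext h
    have : ({x | j.predAbove x = j} : Finset _) = {j.castSucc, j.succ} := by
      ext x; simp only [mem_filter, mem_univ, true_and, hfiber, mem_insert, mem_singleton]; omega
    rw [this, sum_pair Fin.castSucc_lt_succ.ne, mergeP, if_neg (lt_irrefl _), if_pos rfl]
  · have : ({x | i.predAbove x = j} : Finset _) = {j.succ} := by
      ext x; simp only [mem_filter, mem_univ, true_and, hfiber, mem_singleton]; omega
    rw [this, sum_singleton, mergeP, if_neg h.not_gt, if_neg (fun hji => h.ne' (congrArg _ hji))]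

lemma Multiset.sum_replicate_comp {α β γ : Type*} [Fintype α] [Fintype β] [DecidableEq β]
    (f : α → β) (p : α → ℕ) (q : β → γ) :
    ∑ a, replicate (p a) (q (f a)) = ∑ b, replicate (∑ a with f a = b, p a) (q b) := by
  rw [← sum_fiberwise univ f]
  refine sum_congr rfl fun b _ => ?_
  rw [sum_congr rfl fun a ha => by rw [(mem_filter.mp ha).2]]
  exact (map_sum (replicateAddMonoidHom (q b)) _ _).symm

lemma sum_replicate_eq_sum_replicate_mergeP_mergeQ {γ : Type*} {m : ℕ} (i : Fin m)
    (p : Fin (m + 1) → ℕ) (q : Fin (m + 1) → γ) (hq : q i.succ = q i.castSucc) :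
    ∑ a, Multiset.replicate (p a) (q a)
      = ∑ a, Multiset.replicate (mergeP i p a) (mergeQ i q a) := by
  calc ∑ a, Multiset.replicate (p a) (q a)
      = ∑ a, Multiset.replicate (p a) (mergeQ i q (i.predAbove a)) :=
        sum_congr rfl fun a _ => by rw [mergeQ_predAbove i q hq]
    _ = _ := by
        rw [Multiset.sum_replicate_comp i.predAbove p (mergeQ i q)]
        simp only [sum_filter_predAbove_eq_mergeP]

lemma sum_pi_prod_mul_comp {ι α β R : Type*} [Fintype ι] [DecidableEq ι] [Fintype α]
    [Fintype β] [DecidableEq β] [CommSemiring R] (f : α → β) (p : α → R) (F : (ι → β) → R) :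
    ∑ g : ι → α, (∏ b, p (g b)) * F (f ∘ g)
      = ∑ g : ι → β, (∏ b, ∑ x with f x = g b, p x) * F g := by
  rw [← sum_fiberwise univ (fun g : ι → α => f ∘ g)]
  refine sum_congr rfl fun g' _ => ?_
  have hfiber : ({g : ι → α | f ∘ g = g'} : Finset _)
      = Fintype.piFinset fun b => {x | f x = g' b} := by
    ext g
    simp [funext_iff]
  rw [sum_congr rfl fun g hg => by rw [(mem_filter.mp hg).2], ← sum_mul, hfiber,
    ← prod_univ_sum]

lemma normChar_eq_of_parts_eq (F : SymmIrrepFamily) {k n n' : ℕ} (hkn : k ≤ n) (hkn' : k ≤ n')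
    {ν : Nat.Partition n} {ν' : Nat.Partition n'} (h : ν.parts = ν'.parts)
    (μ : Perm (Fin k)) : normChar F hkn ν μ = normChar F hkn' ν' μ := by
  obtain rfl : n = n' := by rw [← ν.parts_sum, ← ν'.parts_sum, h]
  obtain rfl : ν = ν' := Nat.Partition.ext h
  rfl

section Cycles

variable {k : ℕ} (σ : Perm (Fin k))

lemma cycleMk_apply (a : Fin k) : cycleMk σ (σ a) = cycleMk σ a :=
  Quotient.sound ⟨-1, by simp⟩

lemma cycleMk_cycMin (c : PermCycles σ) : cycleMk σ (cycMin σ c) = c :=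
  (mem_filter.mp (min'_mem (cycleElems σ c) (cycleElems_nonempty σ c))).2

variable {σ}

lemma apply_eq_of_comp_eq_self {β : Type*} {φ : Fin k → β} (hφ : φ ∘ σ = φ) {a b : Fin k}
    (h : cycleMk σ a = cycleMk σ b) : φ a = φ b := by
  obtain ⟨n, -, rfl⟩ := (Quotient.exact h : σ.SameCycle a b).exists_pow_eq'
  have hsemiconj : Function.Semiconj φ σ id := fun x => congrFun hφ x
  rw [Perm.coe_pow, hsemiconj.iterate_right n a, Function.iterate_id, id]

lemma sum_filter_comp_eq_self {β M : Type*} [Fintype β] [DecidableEq β] [AddCommMonoid M]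
    (F : (Fin k → β) → M) :
    ∑ φ with φ ∘ σ = φ, F φ = ∑ g : PermCycles σ → β, F (g ∘ cycleMk σ) := by
  have hlift : ∀ φ : Fin k → β, φ ∘ σ = φ → (fun c => φ (cycMin σ c)) ∘ cycleMk σ = φ :=
    fun φ hφ => funext fun a => apply_eq_of_comp_eq_self hφ (cycleMk_cycMin σ _)
  refine sum_nbij' (fun φ c => φ (cycMin σ c)) (· ∘ cycleMk σ) (fun _ _ => mem_univ _)
    (fun g _ => mem_filter.mpr ⟨mem_univ _, funext fun a => congrArg g (cycleMk_apply σ a)⟩)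
    (fun φ hφ => hlift φ (mem_filter.mp hφ).2)
    (fun g _ => funext fun c => congrArg g (cycleMk_cycMin σ c))
    (fun φ hφ => by rw [hlift φ (mem_filter.mp hφ).2])

lemma cycMaxVal_comp_of_monotone {m n : ℕ} {f : Fin m → Fin n} (hf : Monotone f)
    (φ : Fin k → Fin m) (c : PermCycles σ) :
    cycMaxVal σ (f ∘ φ) c = f (cycMaxVal σ φ c) := by
  simp only [cycMaxVal, ← image_image, max'_image hf]

end Cycles

lemma stanleyRHS_eq_sum_cycleColourings {k : ℕ} (μ : Perm (Fin k)) (m : ℕ)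
    (p q : Fin m → ℂ) :
    stanleyRHS μ m p q = (-1) ^ k * ∑ σ : Perm (Fin k), ∑ g : PermCycles σ → Fin m,
      (∏ b, p (g b)) *
        ∏ c : PermCycles (σ * μ), -q (cycMaxVal (σ * μ) (g ∘ cycleMk σ) c) := by
  unfold stanleyRHS
  congr 1
  refine sum_congr rfl fun σ _ => ?_
  simp only [sum_filter_comp_eq_self, Function.comp_apply, cycleMk_cycMin]

theorem stanleyRHS_mergeP_mergeQ {k m : ℕ} (μ : Perm (Fin k)) (i : Fin m)
    (p q : Fin (m + 1) → ℂ) (hq : q i.succ = q i.castSucc) :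
    stanleyRHS μ (m + 1) p q = stanleyRHS μ m (mergeP i p) (mergeQ i q) := by
  simp only [stanleyRHS_eq_sum_cycleColourings]
  congr 1
  refine sum_congr rfl fun σ _ => ?_
  have hq_factor : ∀ g : PermCycles σ → Fin (m + 1),
      ∏ c : PermCycles (σ * μ), -q (cycMaxVal (σ * μ) (g ∘ cycleMk σ) c)
        = ∏ c, -mergeQ i q (cycMaxVal (σ * μ) ((i.predAbove ∘ g) ∘ cycleMk σ) c) :=
    fun g => by
      simp only [Function.comp_assoc, mergeQ_predAbove i q hq,
        cycMaxVal_comp_of_monotone (Fin.predAbove_right_monotone i)]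
  rw [sum_congr rfl fun g _ => by rw [hq_factor g]]
  refine (sum_pi_prod_mul_comp i.predAbove p fun g => ∏ c : PermCycles (σ * μ),
    -mergeQ i q (cycMaxVal (σ * μ) (g ∘ cycleMk σ) c)).trans ?_
  simp only [sum_filter_predAbove_eq_mergeP]

theorem stmt_17_general (k m : ℕ) (μ : Equiv.Perm (Fin k)) (i : Fin m) :
    (∀ (F : SymmIrrepFamily) (p q : Fin (m + 1) → ℕ), (∀ a, 0 < p a) → (∀ a, 0 < q a) →
      (∀ a b : Fin (m + 1), a ≤ b → q b ≤ q a) → q i.succ = q i.castSucc →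
      ∀ (n n' : ℕ) (ν : Nat.Partition n) (ν' : Nat.Partition n')
        (hkn : k ≤ n) (hkn' : k ≤ n'),
        ν.parts = ∑ a : Fin (m + 1), Multiset.replicate (p a) (q a) →
        ν'.parts = ∑ a : Fin m, Multiset.replicate (mergeP i p a) (mergeQ i q a) →
        normChar F hkn ν μ = normChar F hkn' ν' μ) ∧
    (∀ p q : Fin (m + 1) → ℂ, q i.succ = q i.castSucc →
      stanleyRHS μ (m + 1) p q = stanleyRHS μ m (mergeP i p) (mergeQ i q)) := by
  refine ⟨fun F p q _ _ _ hq n n' ν ν' hkn hkn' hν hν' => ?_,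
    fun p q hq => stanleyRHS_mergeP_mergeQ μ i p q hq⟩
  refine normChar_eq_of_parts_eq F hkn hkn' ?_ μ
  rw [hν, hν', sum_replicate_eq_sum_replicate_mergeP_mergeQ i p q hq]

/-- **The functional equation.** Both sides of Stanley's formula satisfy
`F(p,q)|_{q_{i+1} = q_i} = F(p_1,…,p_i+p_{i+1},…,p_{m+1}, q_1,…,q_i,q_{i+2},…,q_{m+1})`:
the left-hand side (the normalised character) because the two partitions coincide, and
the right-hand side `R_m` as an identity of polynomial functions. -/
theorem stmt_17 (k m : ℕ) (hk : 0 < k) (μ : Equiv.Perm (Fin k)) (i : Fin m) :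
    (∀ (F : SymmIrrepFamily) (p q : Fin (m + 1) → ℕ), (∀ a, 0 < p a) → (∀ a, 0 < q a) →
      (∀ a b : Fin (m + 1), a ≤ b → q b ≤ q a) → q i.succ = q i.castSucc →
      ∀ (n n' : ℕ) (ν : Nat.Partition n) (ν' : Nat.Partition n')
        (hkn : k ≤ n) (hkn' : k ≤ n'),
        ν.parts = ∑ a : Fin (m + 1), Multiset.replicate (p a) (q a) →
        ν'.parts = ∑ a : Fin m, Multiset.replicate (mergeP i p a) (mergeQ i q a) →
        normChar F hkn ν μ = normChar F hkn' ν' μ) ∧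
    (∀ p q : Fin (m + 1) → ℂ, q i.succ = q i.castSucc →
      stanleyRHS μ (m + 1) p q = stanleyRHS μ m (mergeP i p) (mergeQ i q)) :=
  stmt_17_general k m μ i
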